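/- arXiv:1404.5457 — 4 statements merged into one kernel-verified Lean document; each statement's English description precedes it below -/
import Mathlib

section
/- The polynomial P_d(t) = ∏_{j=1}^d (t - (2j-1)) - 1 has integer coefficients and is irreducible over the rationals. -/
/-!
If `∏ (X - aᵢ) - 1 = G * H` with distinct integers `aᵢ` and monic non-constant `G`, `H`, then
`G(aᵢ) H(aᵢ) = -1` forces `G(aᵢ) + H(aᵢ) = 0` at every `aᵢ`. As `G + H` has degree below the
number of points, `H = -G`, contradicting that both are monic. Gauss's lemma passes from `ℤ[X]`
to `ℚ[X]`.
-/

open Polynomial Finset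

lemma Int.add_eq_zero_of_mul_eq_neg_one {u v : ℤ} (h : u * v = -1) : u + v = 0 := by
  rcases Int.eq_one_or_neg_one_of_mul_eq_neg_one' h with ⟨rfl, rfl⟩ | ⟨rfl, rfl⟩ <;> rfl

namespace Polynomial

section CommRing

variable {R ι : Type*} [CommRing R] [Nontrivial R] {s : Finset ι}

lemma natDegree_prod_X_sub_C_sub_one (hs : s.Nonempty) (a : ι → R) :
    (∏ i ∈ s, (X - C (a i)) - 1).natDegree = #s := by
  rw [natDegree_sub_eq_left_of_natDegree_lt] <;> simp [hs.card_pos]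

lemma monic_prod_X_sub_C_sub_one (hs : s.Nonempty) (a : ι → R) :
    (∏ i ∈ s, (X - C (a i)) - 1).Monic :=
  (monic_prod_X_sub_C a s).sub_of_left <| degree_lt_degree <| by simp [hs.card_pos]

end CommRing

theorem irreducible_prod_X_sub_C_sub_one {ι : Type*} {s : Finset ι} (hs : s.Nonempty)
    {a : ι → ℤ} (ha : Set.InjOn a s) : Irreducible (∏ i ∈ s, (X - C (a i)) - 1) := by
  have hdeg := natDegree_prod_X_sub_C_sub_one hs a
  refine (monic_prod_X_sub_C_sub_one hs a).irreducible_iff_natDegree.mpr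
    ⟨fun h => by rw [h, natDegree_one] at hdeg; exact hs.card_pos.ne hdeg,
      fun G H hG hH hGH => ?_⟩
  by_contra! hpos
  have hsum : G + H = 0 := by
    refine eq_zero_of_natDegree_lt_card_of_eval_eq_zero (G + H) (f := fun i : s => a i)
      (fun i j hij => Subtype.ext (ha i.2 j.2 hij)) (fun i => ?_) ?_
    · rw [eval_add]
      refine Int.add_eq_zero_of_mul_eq_neg_one ?_
      simp [← eval_mul, hGH, eval_prod, prod_eq_zero i.2]
    · rw [Fintype.card_coe, ← hdeg, ← hGH, hG.natDegree_mul hH]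
      exact (natDegree_add_le G H).trans_lt (by omega)
  have hlc := hH.leadingCoeff
  rw [eq_neg_of_add_eq_zero_right hsum, leadingCoeff_neg, hG.leadingCoeff] at hlc
  exact absurd hlc (by decide)

end Polynomial

/-- The polynomial `P_d(t) = ∏_{j=1}^d (t - (2j-1)) - 1` has integer coefficients
(it is defined in `ℤ[X]`) and is irreducible over `ℚ`. -/
theorem stmt_0 (d : ℕ) (hd : 1 ≤ d) :
    Irreducible
      (((∏ j ∈ Finset.range d, (X - C ((2 * (j : ℤ) + 1)))) - 1).map
        (Int.castRingHom ℚ)) := by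
  have hs : (range d).Nonempty := nonempty_range_iff.mpr (by omega)
  have hodd : Set.InjOn (fun j : ℕ => 2 * (j : ℤ) + 1) (range d) := fun i _ j _ h => by
    simp only at h
    omega
  exact (IsPrimitive.Int.irreducible_iff_irreducible_map_cast
    (monic_prod_X_sub_C_sub_one hs _).isPrimitive).mp (irreducible_prod_X_sub_C_sub_one hs hodd)
end

section
/- The polynomial P_d(t) = ∏_{j=1}^d (t - (2j-1)) - 1 has d distinct real roots. -/
open Polynomial Finset

noncomputable def Pp (d : ℕ) : ℝ[X] := (∏ j ∈ Finset.range d, (X - C (2 * (j : ℝ) + 1))) - 1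

noncomputable def Dd (n : ℕ) : ℝ := ∏ i ∈ Finset.range n, (2 * (i : ℝ) + 1)

lemma one_le_Dd (n : ℕ) : 1 ≤ Dd n := by
  induction n with
  | zero => simp [Dd]
  | succ n ih =>
    rw [Dd, Finset.prod_range_succ, ← Dd]
    have : (0:ℝ) ≤ (n:ℝ) := Nat.cast_nonneg n
    nlinarith

lemma three_le_Dd (n : ℕ) (h : 2 ≤ n) : 3 ≤ Dd n := by
  obtain ⟨m, rfl⟩ : ∃ m, n = m + 1 := ⟨n - 1, by omega⟩
  rw [Dd, Finset.prod_range_succ, ← Dd]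
  have h1 := one_le_Dd m
  have h2 : (1:ℝ) ≤ (m:ℝ) := by exact_mod_cast Nat.one_le_cast.mpr (by omega)
  nlinarith

lemma eval_Pp (d k : ℕ) (hk : k ≤ d) :
    (Pp d).eval (2 * (k:ℝ)) = (-1) ^ (d - k) * (Dd k * Dd (d - k)) - 1 := by
  obtain ⟨m, rfl⟩ : ∃ m, d = k + m := ⟨d - k, by omega⟩
  have hmk : k + m - k = m := by omega
  simp only [Pp, eval_sub, eval_prod, eval_X, eval_C, eval_one, hmk]
  rw [Finset.prod_range_add]
  have hA : ∏ j ∈ Finset.range k, (2 * (k:ℝ) - (2 * (j:ℝ) + 1)) = Dd k := by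
    rw [Dd, ← Finset.prod_range_reflect]
    apply Finset.prod_congr rfl
    intro j hj
    rw [Finset.mem_range] at hj
    have h1 : k - 1 - j = k - (j + 1) := by omega
    rw [h1, Nat.cast_sub (by omega : j + 1 ≤ k)]
    push_cast
    ring
  have hB : ∏ i ∈ Finset.range m, (2 * (k:ℝ) - (2 * ((k + i : ℕ):ℝ) + 1))
      = (-1) ^ m * Dd m := by
    have : ∀ i ∈ Finset.range m, (2 * (k:ℝ) - (2 * ((k + i : ℕ):ℝ) + 1))
        = (-1) * (2 * (i:ℝ) + 1) := by
      intro i _; push_cast; ring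
    rw [Finset.prod_congr rfl this, Finset.prod_mul_distrib, Finset.prod_const,
      Finset.card_range, Dd]
  rw [hA, hB]
  ring

lemma Pp_pos (d k : ℕ) (hd : 2 ≤ d) (hk : k ≤ d) (hp : Even (d - k)) :
    2 ≤ (Pp d).eval (2 * (k:ℝ)) := by
  rw [eval_Pp d k hk, hp.neg_one_pow, one_mul]
  have h1 := one_le_Dd k
  have h2 := one_le_Dd (d - k)
  rcases le_or_gt 2 k with h | h
  · have h3 := three_le_Dd k h
    nlinarith
  · obtain ⟨t, ht⟩ := hp
    have : 2 ≤ d - k := by omega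
    have h3 := three_le_Dd (d - k) this
    nlinarith

lemma Pp_neg (d k : ℕ) (hk : k ≤ d) (hp : Odd (d - k)) :
    (Pp d).eval (2 * (k:ℝ)) ≤ -2 := by
  rw [eval_Pp d k hk, hp.neg_one_pow, neg_one_mul]
  nlinarith [one_le_Dd k, one_le_Dd (d - k)]

lemma exists_root (d k : ℕ) (hd : 2 ≤ d) (hk : k < d) :
    ∃ r ∈ Set.Ioo (2 * (k:ℝ)) (2 * (k:ℝ) + 2), (Pp d).eval r = 0 := by
  have hc : ContinuousOn (fun x => (Pp d).eval x) (Set.Icc (2 * (k:ℝ)) (2 * (k:ℝ) + 2)) :=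
    (Pp d).continuous_aeval.continuousOn
  have hle : (2 * (k:ℝ)) ≤ 2 * k + 2 := by linarith
  have hx1 : (2 * (k:ℝ) + 2) = 2 * ((k + 1 : ℕ):ℝ) := by push_cast; ring
  rcases Nat.even_or_odd (d - k) with hp | hp
  · -- eval at 2k ≥ 2, eval at 2k+2 ≤ -2
    have ha := Pp_pos d k hd hk.le hp
    have hb : Odd (d - (k + 1)) := by
      obtain ⟨t, ht⟩ := hp
      exact ⟨t - 1, by omega⟩
    have hb' := Pp_neg d (k + 1) hk hb
    have h0 : (0:ℝ) ∈ Set.Ioo ((fun x => (Pp d).eval x) (2 * (k:ℝ) + 2))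
        ((fun x => (Pp d).eval x) (2 * (k:ℝ))) := by
      simp only [hx1]
      constructor <;> linarith
    obtain ⟨r, hr, hr0⟩ := intermediate_value_Ioo' hle hc h0
    exact ⟨r, hr, hr0⟩
  · have ha := Pp_neg d k hk.le hp
    have hb : Even (d - (k + 1)) := by
      obtain ⟨t, ht⟩ := hp
      exact ⟨t, by omega⟩
    have hb' := Pp_pos d (k + 1) hd hk hb
    have h0 : (0:ℝ) ∈ Set.Ioo ((fun x => (Pp d).eval x) (2 * (k:ℝ)))
        ((fun x => (Pp d).eval x) (2 * (k:ℝ) + 2)) := by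
      simp only [hx1]
      constructor <;> linarith
    obtain ⟨r, hr, hr0⟩ := intermediate_value_Ioo hle hc h0
    exact ⟨r, hr, hr0⟩

lemma natDegree_Pp (d : ℕ) : (Pp d).natDegree = d := by
  have h1 : Pp d = (∏ j ∈ Finset.range d, (X - C (2 * (j : ℝ) + 1))) - C 1 := by
    rw [Pp, map_one]
  rw [h1, natDegree_sub_C,
    natDegree_prod_of_monic _ _ (fun j _ => monic_X_sub_C _)]
  simp only [natDegree_X_sub_C, Finset.sum_const, Finset.card_range, smul_eq_mul, mul_one]

lemma Pp_ne_zero (d : ℕ) (hd : 1 ≤ d) : Pp d ≠ 0 := by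
  intro h
  have := natDegree_Pp d
  rw [h, natDegree_zero] at this
  omega

/-- The polynomial `P_d(t) = ∏_{j=1}^d (t - (2j-1)) - 1`, viewed as a real
polynomial of degree `d`, has exactly `d` distinct real roots. -/
theorem stmt_1 (d : ℕ) (hd : 1 ≤ d) :
    ∃ S : Finset ℝ, S.card = d ∧
      ∀ x : ℝ, ((∏ j ∈ Finset.range d, (X - C (2 * (j : ℝ) + 1))) - 1).eval x = 0 ↔ x ∈ S := by
  rcases eq_or_lt_of_le hd with h1 | hd2
  · subst h1
    refine ⟨{2}, by simp, ?_⟩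
    intro x
    rw [Finset.prod_range_one]
    simp only [eval_sub, eval_X, eval_C, eval_one, Finset.mem_singleton]
    norm_num
    constructor <;> intro h <;> linarith
  · have hd2' : 2 ≤ d := hd2
    have hne := Pp_ne_zero d hd
    have hroot : ∀ k, ∃ r, k < d → r ∈ Set.Ioo (2 * (k:ℝ)) (2 * (k:ℝ) + 2) ∧ (Pp d).eval r = 0 := by
      intro k
      by_cases h : k < d
      · obtain ⟨r, hr, h0⟩ := exists_root d k hd2' h
        exact ⟨r, fun _ => ⟨hr, h0⟩⟩
      · exact ⟨0, fun hc => absurd hc h⟩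
    choose r hr using hroot
    refine ⟨(Pp d).roots.toFinset, ?_, ?_⟩
    · apply le_antisymm
      · calc (Pp d).roots.toFinset.card ≤ Multiset.card (Pp d).roots :=
              Multiset.toFinset_card_le _
          _ ≤ (Pp d).natDegree := (Pp d).card_roots'
          _ = d := natDegree_Pp d
      · have hinj : Set.InjOn r (Finset.range d) := by
          intro a ha b hb hab
          rw [Finset.coe_range, Set.mem_Iio] at ha hb
          by_contra hne'
          have key : ∀ u v : ℕ, u < v → v < d → r u < r v := by
            intro u v huv hv
            have h1 := (hr u (lt_trans huv hv)).1
            have h2 := (hr v hv).1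
            have : (2 * (u:ℝ) + 2) ≤ 2 * v := by
              have : (u:ℝ) + 1 ≤ v := by exact_mod_cast huv
              linarith
            exact lt_of_lt_of_le h1.2 (le_trans this h2.1.le)
          rcases lt_trichotomy a b with h | h | h
          · exact absurd hab (ne_of_lt (key a b h hb))
          · exact hne' h
          · exact absurd hab.symm (ne_of_lt (key b a h ha))
        have hsub : (Finset.range d).image r ⊆ (Pp d).roots.toFinset := by
          intro x hx
          rw [Finset.mem_image] at hx
          obtain ⟨k, hk, rfl⟩ := hx
          rw [Finset.mem_range] at hk
          rw [Multiset.mem_toFinset, mem_roots hne]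
          exact (hr k hk).2
        calc d = ((Finset.range d).image r).card := by
              rw [Finset.card_image_of_injOn hinj, Finset.card_range]
          _ ≤ (Pp d).roots.toFinset.card := Finset.card_le_card hsub
    · intro x
      rw [Multiset.mem_toFinset, mem_roots hne]
      rfl
end

section
/- Let Λ ⊂ ℝ^d be an additive subgroup such that every nonzero z ∈ Λ has ∏_{i=1}^d |z_i| ≥ 1, and let a > 0. Then for every axis-parallel box Ω ⊂ ℝ^d, the number of points of aΛ in Ω is at most a^{-d}·vol(Ω) + 1. -/
/-- If `Λ ⊆ ℝ^d` is an additive subgroup such that every nonzero `z ∈ Λ` satisfies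
`∏ i, |z i| ≥ 1`, and `a > 0`, then for every axis-parallel box `Ω` the number of points
of `aΛ` in `Ω` is at most `a^{-d}·vol(Ω) + 1`. -/
theorem stmt_7 (d : ℕ) (Λ : AddSubgroup (Fin d → ℝ))
    (hΛ : ∀ z ∈ Λ, z ≠ 0 → 1 ≤ ∏ i : Fin d, |z i|)
    (a : ℝ) (ha : 0 < a) (u v : Fin d → ℝ) (huv : ∀ i, u i ≤ v i) :
    {z : Fin d → ℝ | (∃ w ∈ Λ, z = a • w) ∧ ∀ i, z i ∈ Set.Icc (u i) (v i)}.Finite ∧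
      ({z : Fin d → ℝ | (∃ w ∈ Λ, z = a • w) ∧
          ∀ i, z i ∈ Set.Icc (u i) (v i)}.ncard : ℝ)
        ≤ a ^ (-(d : ℤ)) * (∏ i : Fin d, (v i - u i)) + 1 := by
  set S := {z : Fin d → ℝ | (∃ w ∈ Λ, z = a • w) ∧ ∀ i, z i ∈ Set.Icc (u i) (v i)} with hSdef
  set V := ∏ i : Fin d, (v i - u i) with hVdef
  have hV0 : 0 ≤ V := Finset.prod_nonneg fun i _ => sub_nonneg.2 (huv i)
  have had : (0:ℝ) < a ^ d := pow_pos ha d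
  set N : ℕ := ⌊V / a ^ d⌋₊ + 1 with hNdef
  have hN0 : (0:ℝ) < N := by positivity
  -- separation
  have hsep : ∀ z ∈ S, ∀ z' ∈ S, z ≠ z' → a ^ d ≤ ∏ i, |z i - z' i| := by
    rintro z ⟨⟨w, hw, rfl⟩, hz⟩ z' ⟨⟨w', hw', rfl⟩, hz'⟩ hne
    have hww' : w - w' ∈ Λ := sub_mem hw hw'
    have hne' : w - w' ≠ 0 := by
      intro h
      exact hne (by rw [sub_eq_zero] at h; rw [h])
    have h1 := hΛ _ hww' hne'
    have : ∏ i, |a • w i - a • w' i| = a ^ d * ∏ i, |(w - w') i| := by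
      calc ∏ i, |a • w i - a • w' i| = ∏ i, a * |(w - w') i| := by
            refine Finset.prod_congr rfl fun i _ => ?_
            simp only [Pi.sub_apply, smul_eq_mul]
            rw [← mul_sub, abs_mul, abs_of_pos ha]
        _ = a ^ d * ∏ i, |(w - w') i| := by
            rw [Finset.prod_mul_distrib, Finset.prod_const, Finset.card_univ,
              Fintype.card_fin]
    simp only [Pi.smul_apply] at this ⊢
    rw [this]
    have hp : (0:ℝ) ≤ ∏ i, |(w - w') i| :=
      Finset.prod_nonneg fun i _ => abs_nonneg ((w - w') i)
    nlinarith
  have hVN : V / N < a ^ d := by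
    rw [div_lt_iff₀ hN0]
    have h1 : V / a ^ d < (N : ℝ) := by
      have := Nat.lt_floor_add_one (V / a ^ d)
      push_cast [hNdef]
      push_cast at this
      linarith
    calc V = (V / a ^ d) * a ^ d := by field_simp
      _ < N * a ^ d := by exact mul_lt_mul_of_pos_right h1 had
      _ = a ^ d * N := by ring
  -- key card bound
  have key : ∀ T : Finset (Fin d → ℝ), ↑T ⊆ S → T.card ≤ N := by
    intro T hT
    rcases Nat.eq_zero_or_pos d with hd | hd
    · -- subsingleton type
      subst hd
      haveI : Subsingleton (Fin 0 → ℝ) := by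
        constructor; intro x y; funext i; exact absurd i.2 (by simp)
      calc T.card ≤ 1 := Finset.card_le_one.2 fun x _ y _ => Subsingleton.elim x y
        _ ≤ N := Nat.le_add_left 1 _
    · by_contra hcard
      push_neg at hcard
      set i0 : Fin d := ⟨0, hd⟩ with hi0
      set L := v i0 - u i0 with hL
      set c := L / N with hc
      have hL0 : 0 ≤ L := sub_nonneg.2 (huv i0)
      have hc0 : 0 ≤ c := div_nonneg hL0 hN0.le
      have hLcN : L = c * N := by
        rw [hc]; field_simp
      set f : (Fin d → ℝ) → ℕ := fun z => min ⌊(z i0 - u i0) / c⌋₊ (N - 1) with hf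
      have hmaps : ∀ z ∈ T, f z ∈ Finset.range N := by
        intro z _
        simp only [Finset.mem_range, hf]
        exact lt_of_le_of_lt (min_le_right _ _) (Nat.sub_lt (by omega) one_pos)
      obtain ⟨x, hxT, y, hyT, hxy, hfxy⟩ :=
        Finset.exists_ne_map_eq_of_card_lt_of_maps_to (by simpa using hcard) hmaps
      have hxS := hT hxT
      have hyS := hT hyT
      -- bounds for any z ∈ S
      have hb : ∀ z ∈ S, (f z : ℝ) * c ≤ z i0 - u i0 ∧ z i0 - u i0 ≤ ((f z : ℝ) + 1) * c := by
        intro z hz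
        obtain ⟨-, hzc⟩ := hz
        have h1 : u i0 ≤ z i0 := (hzc i0).1
        have h2 : z i0 ≤ v i0 := (hzc i0).2
        set x0 := z i0 - u i0 with hx0
        have hx0' : 0 ≤ x0 := by linarith
        have hxL : x0 ≤ L := by simp only [hx0, hL]; linarith
        constructor
        · rcases eq_or_lt_of_le hc0 with hc' | hc'
          · rw [← hc']; simpa using hx0'
          · have : (f z : ℝ) ≤ ⌊x0 / c⌋₊ := by
              exact_mod_cast Nat.cast_le.2 (min_le_left _ _)
            calc (f z : ℝ) * c ≤ (⌊x0 / c⌋₊ : ℝ) * c :=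
                  mul_le_mul_of_nonneg_right this hc0
              _ ≤ (x0 / c) * c := mul_le_mul_of_nonneg_right
                  (Nat.floor_le (div_nonneg hx0' hc0)) hc0
              _ = x0 := div_mul_cancel₀ _ (ne_of_gt hc')
        · rcases le_or_gt ⌊x0 / c⌋₊ (N - 1) with hm | hm
          · have hfz : f z = ⌊x0 / c⌋₊ := min_eq_left hm
            rcases eq_or_lt_of_le hc0 with hc' | hc'
            · have : L = 0 := by rw [hLcN, ← hc']; ring
              have : x0 = 0 := le_antisymm (by linarith) hx0'
              rw [this, ← hc']; simp
            · have := Nat.lt_floor_add_one (x0 / c)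
              rw [hfz]
              calc x0 = (x0 / c) * c := (div_mul_cancel₀ _ (ne_of_gt hc')).symm
                _ ≤ ((⌊x0 / c⌋₊ : ℝ) + 1) * c :=
                    mul_le_mul_of_nonneg_right (by push_cast; linarith) hc0
          · have hfz : f z = N - 1 := min_eq_right hm.le
            have hNcast : ((f z : ℝ) + 1) = N := by
              rw [hfz]
              have : (1:ℕ) ≤ N := by omega
              push_cast [Nat.cast_sub this]
              ring
            rw [hNcast, ← mul_comm, ← hLcN]
            exact hxL
      obtain ⟨hx1, hx2⟩ := hb x hxS
      obtain ⟨hy1, hy2⟩ := hb y hyS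
      have hclose : |x i0 - y i0| ≤ c := by
        rw [hfxy] at hx1 hx2
        rw [abs_le]
        constructor <;> nlinarith
      -- product bound
      have hprod : ∏ i, |x i - y i| ≤ V / N := by
        have hle : ∏ i, |x i - y i| ≤
            ∏ i, Function.update (fun i => v i - u i) i0 c i := by
          refine Finset.prod_le_prod (fun i _ => abs_nonneg _) fun i _ => ?_
          rcases eq_or_ne i i0 with rfl | hi
          · simpa using hclose
          · rw [Function.update_of_ne hi]
            obtain ⟨-, hxc⟩ := hxS
            obtain ⟨-, hyc⟩ := hyS
            have h1 := hxc i; have h2 := hyc i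
            simp only [Set.mem_Icc] at h1 h2
            rw [abs_le]; constructor <;> linarith
        have heq : ∏ i, Function.update (fun i => v i - u i) i0 c i = V / N := by
          rw [Finset.prod_update_of_mem (Finset.mem_univ i0)]
          have hV' : V = (v i0 - u i0) * ∏ i ∈ Finset.univ \ {i0}, (v i - u i) := by
            simp only [Finset.sdiff_singleton_eq_erase]
            exact (Finset.mul_prod_erase Finset.univ _ (Finset.mem_univ i0)).symm
          rw [hV', ← hL, hc]
          ring
        linarith
      have := hsep x hxS y hyS hxy
      linarith
  -- finiteness
  have hfin : S.Finite := by
    by_contra hinf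
    have hinf' : S.Infinite := hinf
    obtain ⟨T, hTS, hTcard⟩ := hinf'.exists_subset_card_eq (N + 1)
    have := key T hTS
    omega
  refine ⟨hfin, ?_⟩
  have hcard : S.ncard ≤ N := by
    rw [Set.ncard_eq_toFinset_card S hfin]
    exact key _ (by simp)
  have h1 : (S.ncard : ℝ) ≤ N := Nat.cast_le.2 hcard
  have h2 : (N : ℝ) ≤ V / a ^ d + 1 := by
    rw [hNdef]
    push_cast
    have := Nat.floor_le (div_nonneg hV0 had.le)
    linarith
  have h3 : a ^ (-(d : ℤ)) * V = V / a ^ d := by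
    rw [zpow_neg, zpow_natCast, inv_mul_eq_div]
  rw [h3]
  linarith
end

section
/- Let Λ ⊂ ℝ^d be an additive subgroup with ∏_j |z_j| ≥ 1 for all nonzero z ∈ Λ, and a > 1 with r = ⌊d·log₂ a⌋. Then the dyadic shell ρ(m) contains no nonzero points of aΛ whenever ‖m‖₁ ≤ r. -/
/-!
Write `z = a • w` with `0 ≠ w ∈ Λ`. Then `∏ |z_j| = a^d ∏ |w_j| ≥ a^d`, while a point of `ρ(m)`
satisfies `∏ |z_j| < ∏ 2^{m_j} = 2^{‖m‖₁}`. Since `‖m‖₁ ≤ d log₂ a` gives `2^{‖m‖₁} ≤ a^d`,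
the two bounds are incompatible.
-/

open Real

namespace Finset

variable {ι R : Type*} [CommSemiring R] [PartialOrder R] [IsStrictOrderedRing R]
  {s : Finset ι} {f g : ι → R}

lemma prod_lt_prod_of_nonempty_of_nonneg (hf : ∀ i ∈ s, 0 ≤ f i) (hfg : ∀ i ∈ s, f i < g i)
    (hs : s.Nonempty) : ∏ i ∈ s, f i < ∏ i ∈ s, g i := by
  by_cases h0 : ∃ i ∈ s, f i = 0
  · obtain ⟨i, hi, hfi⟩ := h0
    rw [prod_eq_zero hi hfi]
    exact prod_pos fun j hj => (hf j hj).trans_lt (hfg j hj)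
  · push Not at h0
    exact prod_lt_prod_of_nonempty (fun i hi => (hf i hi).lt_of_ne (h0 i hi).symm) hfg hs

end Finset

lemma pow_card_le_prod_abs_smul {ι : Type*} [Fintype ι] {a : ℝ} (ha : 0 ≤ a) {w : ι → ℝ}
    (hw : 1 ≤ ∏ j, |w j|) :
    a ^ Fintype.card ι ≤ ∏ j, |(a • w) j| :=
  calc a ^ Fintype.card ι = a ^ Fintype.card ι * 1 := (mul_one _).symm
    _ ≤ a ^ Fintype.card ι * ∏ j, |w j| := by gcongr
    _ = ∏ j, |(a • w) j| := by
      simp [abs_mul, abs_of_nonneg ha, Finset.prod_mul_distrib]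

lemma prod_abs_lt_pow_sum {ι : Type*} [Fintype ι] [Nonempty ι] {b : ℝ} {z : ι → ℝ} {m : ι → ℕ}
    (hz : ∀ j, |z j| < b ^ m j) : ∏ j, |z j| < b ^ ∑ j, m j := by
  rw [← Finset.prod_pow_eq_pow_sum]
  exact Finset.prod_lt_prod_of_nonempty_of_nonneg (fun j _ => abs_nonneg _) (fun j _ => hz j)
    Finset.univ_nonempty

lemma pow_le_pow_of_le_mul_logb {a b : ℝ} (hb : 1 < b) (ha : 0 < a) {k d : ℕ}
    (h : (k : ℝ) ≤ d * logb b a) : b ^ k ≤ a ^ d := by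
  rwa [← logb_pow, le_logb_iff_rpow_le hb (pow_pos ha d), rpow_natCast] at h

/-- If `Λ ⊆ ℝ^d` is an additive subgroup with `∏_j |z_j| ≥ 1` for all nonzero `z ∈ Λ`,
`a > 1` and `r = ⌊d·log₂ a⌋`, then the dyadic shell `ρ(m)` contains no nonzero point of
`aΛ` whenever `‖m‖₁ ≤ r`. -/
theorem stmt_15 (d : ℕ) (Λ : AddSubgroup (Fin d → ℝ))
    (hΛ : ∀ z ∈ Λ, z ≠ 0 → 1 ≤ ∏ j : Fin d, |z j|)
    (a : ℝ) (ha : 1 < a) (m : Fin d → ℕ)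
    (hm : (∑ j, (m j : ℤ)) ≤ ⌊(d : ℝ) * Real.logb 2 a⌋) :
    ∀ z : Fin d → ℝ, (∃ w ∈ Λ, w ≠ 0 ∧ z = a • w) →
      ¬(∀ j, (⌊(2 : ℝ) ^ ((m j : ℤ) - 1)⌋ : ℝ) ≤ |z j| ∧ |z j| < 2 ^ (m j)) := by
  rintro z ⟨w, hw, hw0, rfl⟩ hz
  cases isEmpty_or_nonempty (Fin d)
  · exact hw0 (Subsingleton.elim w 0)
  have hsum : ((∑ j, m j : ℕ) : ℝ) ≤ d * logb 2 a := by
    exact_mod_cast Int.le_floor.mp (by exact_mod_cast hm : ((∑ j, m j : ℕ) : ℤ) ≤ _)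
  have hlower := pow_card_le_prod_abs_smul (a := a) (by linarith) (hΛ w hw hw0)
  have hupper := prod_abs_lt_pow_sum fun j => (hz j).2
  rw [Fintype.card_fin] at hlower
  exact (hlower.trans_lt hupper).not_ge (pow_le_pow_of_le_mul_logb one_lt_two (by linarith) hsum)
end
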